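/- Let γ be a real number with 3 < γ < 4. Then there exists a constant C > 0 such that for every integer q ≥ 2: q^{γ−2} · ∑_{s=1}^∞ ∑_{j : 1 ≤ j < s·q/2} (s·q − j)^{−4} · j^{−(γ−1)} ≤ C · q^{γ−4}. -/
import Mathlib


/-- The term `(sq − j)⁻⁴ j^{−(γ−1)}` of the double sum over `1 ≤ j < sq/2`
(here `s ≥ 1` is encoded as `s + 1` with `s : ℕ`). -/
noncomputable def termIp (γ : ℝ) (q s j : ℕ) : ℝ :=
  if 1 ≤ j ∧ 2 * j < (s + 1) * q then
    ((((s + 1) * q : ℕ) : ℝ) - (j : ℝ)) ^ (-(4 : ℝ)) * (j : ℝ) ^ (-(γ - 1))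
  else 0

lemma termIp_nonneg (γ : ℝ) (q s j : ℕ) : 0 ≤ termIp γ q s j := by
  unfold termIp
  split
  · rename_i h
    obtain ⟨h1, h2⟩ := h
    have : (j : ℝ) < (((s + 1) * q : ℕ) : ℝ) := by
      exact_mod_cast lt_of_le_of_lt (by omega : j ≤ 2 * j) h2
    exact mul_nonneg (Real.rpow_nonneg (by linarith) _)
      (Real.rpow_nonneg (Nat.cast_nonneg j) _)
  · exact le_rfl

lemma two_rpow_neg_four : (2 : ℝ) ^ (-(4 : ℝ)) = 1 / 16 := by
  rw [show (-(4 : ℝ)) = ((-4 : ℤ) : ℝ) by norm_num, Real.rpow_intCast]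
  norm_num

/-- Pointwise bound: `termIp γ q s j ≤ 16 ((s+1)q)⁻⁴ j^{-(γ-1)}`. -/
lemma termIp_le (γ : ℝ) (q s j : ℕ) (hq : 2 ≤ q) :
    termIp γ q s j ≤ 16 * (((s + 1) * q : ℕ) : ℝ) ^ (-(4 : ℝ)) * (j : ℝ) ^ (-(γ - 1)) := by
  unfold termIp
  split
  · rename_i h
    obtain ⟨h1, h2⟩ := h
    set N : ℝ := (((s + 1) * q : ℕ) : ℝ) with hN
    have hN2 : (2 : ℝ) ≤ N := by
      have h' : 2 ≤ (s + 1) * q := le_trans hq (Nat.le_mul_of_pos_left q (Nat.succ_pos s))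
      rw [hN]; exact_mod_cast h'
    have hjN : 2 * (j : ℝ) < N := by rw [hN]; push_cast; exact_mod_cast h2
    have hhalf : (0 : ℝ) < N / 2 := by linarith
    have hle : N / 2 ≤ N - (j : ℝ) := by linarith
    have key : (N - (j : ℝ)) ^ (-(4 : ℝ)) ≤ 16 * N ^ (-(4 : ℝ)) := by
      have h1' : (N - (j : ℝ)) ^ (-(4 : ℝ)) ≤ (N / 2) ^ (-(4 : ℝ)) :=
        Real.rpow_le_rpow_of_nonpos hhalf hle (by norm_num)
      have h2' : (N / 2) ^ (-(4 : ℝ)) = 16 * N ^ (-(4 : ℝ)) := by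
        rw [Real.div_rpow (by linarith) (by norm_num), two_rpow_neg_four]
        ring
      linarith
    have hjpow : (0 : ℝ) ≤ (j : ℝ) ^ (-(γ - 1)) := Real.rpow_nonneg (Nat.cast_nonneg j) _
    calc (N - (j : ℝ)) ^ (-(4 : ℝ)) * (j : ℝ) ^ (-(γ - 1))
        ≤ 16 * N ^ (-(4 : ℝ)) * (j : ℝ) ^ (-(γ - 1)) :=
          mul_le_mul_of_nonneg_right key hjpow
      _ = 16 * N ^ (-(4 : ℝ)) * (j : ℝ) ^ (-(γ - 1)) := rfl
  · positivity

/-- Estimate of term I′: for `3 < γ < 4` there is `C > 0` such that for all `q ≥ 2`,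
`q^{γ−2} ∑_{s≥1} ∑_{1 ≤ j < sq/2} (sq−j)⁻⁴ j^{−(γ−1)} ≤ C q^{γ−4}`. -/
theorem term_Ip_estimate
    (γ : ℝ) (hγ1 : 3 < γ) (hγ2 : γ < 4) :
    ∃ C > 0, ∀ q : ℕ, 2 ≤ q →
      (∀ s : ℕ, Summable (fun j : ℕ => termIp γ q s j)) ∧
      Summable (fun s : ℕ => ∑' j : ℕ, termIp γ q s j) ∧
      (q : ℝ) ^ (γ - 2) * (∑' s : ℕ, ∑' j : ℕ, termIp γ q s j) ≤
        C * (q : ℝ) ^ (γ - 4) := by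
  -- summable weight in `j`
  have hw : Summable (fun j : ℕ => (j : ℝ) ^ (-(γ - 1))) :=
    Real.summable_nat_rpow.mpr (by linarith)
  -- summable weight in `s`
  have hs4 : Summable (fun s : ℕ => ((s + 1 : ℕ) : ℝ) ^ (-(4 : ℝ))) := by
    have : Summable (fun n : ℕ => (n : ℝ) ^ (-(4 : ℝ))) :=
      Real.summable_nat_rpow.mpr (by norm_num)
    exact this.comp_injective (fun a b h => by omega)
  set Z : ℝ := ∑' j : ℕ, (j : ℝ) ^ (-(γ - 1)) with hZ
  set Z4 : ℝ := ∑' s : ℕ, ((s + 1 : ℕ) : ℝ) ^ (-(4 : ℝ)) with hZ4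
  have hZ0 : 0 ≤ Z := tsum_nonneg fun j => Real.rpow_nonneg (Nat.cast_nonneg j) _
  have hZ40 : 0 ≤ Z4 := tsum_nonneg fun s => Real.rpow_nonneg (Nat.cast_nonneg _) _
  refine ⟨16 * (Z + 1) * (Z4 + 1), by positivity, fun q hq => ?_⟩
  have hq0 : (0 : ℝ) < (q : ℝ) := by exact_mod_cast lt_of_lt_of_le (by norm_num) hq
  have hq1 : (1 : ℝ) ≤ (q : ℝ) := by exact_mod_cast le_trans (by norm_num) hq
  -- pointwise bound function
  have hNsplit : ∀ s : ℕ, (((s + 1) * q : ℕ) : ℝ) ^ (-(4 : ℝ)) =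
      ((s + 1 : ℕ) : ℝ) ^ (-(4 : ℝ)) * (q : ℝ) ^ (-(4 : ℝ)) := by
    intro s
    push_cast
    rw [Real.mul_rpow (by positivity) (by positivity)]
  -- summability in `j` for each `s`
  have hsumj : ∀ s : ℕ, Summable (fun j : ℕ => termIp γ q s j) := by
    intro s
    refine Summable.of_nonneg_of_le (fun j => termIp_nonneg γ q s j)
      (fun j => termIp_le γ q s j hq) ?_
    exact (hw.mul_left _)
  have hsum_s : Summable (fun s : ℕ =>
      16 * Z * (q : ℝ) ^ (-(4 : ℝ)) * ((s + 1 : ℕ) : ℝ) ^ (-(4 : ℝ))) :=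
    hs4.mul_left _
  have hinner : ∀ s : ℕ, ∑' j : ℕ, termIp γ q s j ≤
      16 * Z * (q : ℝ) ^ (-(4 : ℝ)) * ((s + 1 : ℕ) : ℝ) ^ (-(4 : ℝ)) := by
    intro s
    calc ∑' j : ℕ, termIp γ q s j
        ≤ ∑' j : ℕ, 16 * (((s + 1) * q : ℕ) : ℝ) ^ (-(4 : ℝ)) * (j : ℝ) ^ (-(γ - 1)) :=
          Summable.tsum_le_tsum (fun j => termIp_le γ q s j hq) (hsumj s) (hw.mul_left _)
      _ = 16 * (((s + 1) * q : ℕ) : ℝ) ^ (-(4 : ℝ)) * Z := tsum_mul_left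
      _ = 16 * Z * (q : ℝ) ^ (-(4 : ℝ)) * ((s + 1 : ℕ) : ℝ) ^ (-(4 : ℝ)) := by
          rw [hNsplit s]; ring
  have hsum_inner : Summable (fun s : ℕ => ∑' j : ℕ, termIp γ q s j) :=
    Summable.of_nonneg_of_le
      (fun s => tsum_nonneg fun j => termIp_nonneg γ q s j) hinner hsum_s
  refine ⟨hsumj, hsum_inner, ?_⟩
  have htot : (∑' s : ℕ, ∑' j : ℕ, termIp γ q s j) ≤
      16 * Z * (q : ℝ) ^ (-(4 : ℝ)) * Z4 := by
    calc (∑' s : ℕ, ∑' j : ℕ, termIp γ q s j)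
        ≤ ∑' s : ℕ, 16 * Z * (q : ℝ) ^ (-(4 : ℝ)) * ((s + 1 : ℕ) : ℝ) ^ (-(4 : ℝ)) :=
          Summable.tsum_le_tsum hinner hsum_inner hsum_s
      _ = 16 * Z * (q : ℝ) ^ (-(4 : ℝ)) * Z4 := tsum_mul_left
  have hqpow : (0 : ℝ) < (q : ℝ) ^ (γ - 2) := Real.rpow_pos_of_pos hq0 _
  have step1 : (q : ℝ) ^ (γ - 2) * (∑' s : ℕ, ∑' j : ℕ, termIp γ q s j) ≤
      (q : ℝ) ^ (γ - 2) * (16 * Z * (q : ℝ) ^ (-(4 : ℝ)) * Z4) :=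
    mul_le_mul_of_nonneg_left htot hqpow.le
  have hq4 : (0 : ℝ) ≤ (q : ℝ) ^ (-(4 : ℝ)) := Real.rpow_nonneg hq0.le _
  have step2 : (q : ℝ) ^ (γ - 2) * (16 * Z * (q : ℝ) ^ (-(4 : ℝ)) * Z4) ≤
      16 * (Z + 1) * (Z4 + 1) * ((q : ℝ) ^ (γ - 2) * (q : ℝ) ^ (-(4 : ℝ))) := by
    have h1 : 16 * Z * (q : ℝ) ^ (-(4 : ℝ)) * Z4 ≤
        16 * (Z + 1) * (Z4 + 1) * (q : ℝ) ^ (-(4 : ℝ)) := by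
      have : 16 * Z * Z4 ≤ 16 * (Z + 1) * (Z4 + 1) := by nlinarith
      nlinarith [mul_le_mul_of_nonneg_right this hq4]
    nlinarith [mul_le_mul_of_nonneg_left h1 hqpow.le]
  have hmul : (q : ℝ) ^ (γ - 2) * (q : ℝ) ^ (-(4 : ℝ)) = (q : ℝ) ^ (γ - 6) := by
    rw [← Real.rpow_add hq0]; ring_nf
  have hexp : (q : ℝ) ^ (γ - 6) ≤ (q : ℝ) ^ (γ - 4) :=
    Real.rpow_le_rpow_of_exponent_le hq1 (by linarith)
  calc (q : ℝ) ^ (γ - 2) * (∑' s : ℕ, ∑' j : ℕ, termIp γ q s j)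
      ≤ 16 * (Z + 1) * (Z4 + 1) * ((q : ℝ) ^ (γ - 2) * (q : ℝ) ^ (-(4 : ℝ))) :=
        le_trans step1 step2
    _ = 16 * (Z + 1) * (Z4 + 1) * (q : ℝ) ^ (γ - 6) := by rw [hmul]
    _ ≤ 16 * (Z + 1) * (Z4 + 1) * (q : ℝ) ^ (γ - 4) :=
        mul_le_mul_of_nonneg_left hexp (by positivity)
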